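/- On R^6, define P with nonzero entries P^{13} = p13, P^{24} = p24, P^{26} = p24 x5, P^{36} = p36, P^{56} = p56 and P' with nonzero entries P'^{13} = a31 x1, P'^{24} = b42 x2 + b44 x4, P'^{26} = b42 x2 x5 + b44 x4 x5, P'^{56} = e65 x5 (real constants). Then P and P' are compatible Poisson structures: [P,P] = [P',P'] = [P,P'] = 0 identically on R^6. -/

import Mathlib

open scoped BigOperators

noncomputable def pd {m : ℕ} (μ : Fin m) (f : (Fin m → ℝ) → ℝ) (x : Fin m → ℝ) : ℝ :=
  fderiv ℝ f x (Pi.single μ 1)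

/-- Poisson bracket associated to a bivector field `P`. -/
noncomputable def pbrk {m : ℕ} (P : (Fin m → ℝ) → Fin m → Fin m → ℝ)
    (f g : (Fin m → ℝ) → ℝ) (x : Fin m → ℝ) : ℝ :=
  ∑ μ, ∑ ν, P x μ ν * pd μ f x * pd ν g x

/-- Schouten bracket `[P,P]^{λμν}`. -/
noncomputable def schouten {m : ℕ} (P : (Fin m → ℝ) → Fin m → Fin m → ℝ)
    (l μ ν : Fin m) (x : Fin m → ℝ) : ℝ :=
  ∑ ρ, (P x ρ l * pd ρ (fun y => P y μ ν) x
      + P x ρ ν * pd ρ (fun y => P y l μ) x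
      + P x ρ μ * pd ρ (fun y => P y ν l) x)

/-- Mixed Schouten bracket `[P,Q]^{λμν}`. -/
noncomputable def schoutenMixed {m : ℕ} (P Q : (Fin m → ℝ) → Fin m → Fin m → ℝ)
    (l μ ν : Fin m) (x : Fin m → ℝ) : ℝ :=
  ∑ ρ, (P x ρ l * pd ρ (fun y => Q y μ ν) x + Q x ρ l * pd ρ (fun y => P y μ ν) x
      + P x ρ ν * pd ρ (fun y => Q y l μ) x + Q x ρ ν * pd ρ (fun y => P y l μ) x
      + P x ρ μ * pd ρ (fun y => Q y ν l) x + Q x ρ μ * pd ρ (fun y => P y ν l) x)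

/-- The Poisson bivector `P` on the nilpotent group `A_{6,25}`. -/
noncomputable def P625 (p13 p24 p36 p56 : ℝ) : (Fin 6 → ℝ) → Fin 6 → Fin 6 → ℝ :=
  fun x μ ν =>
    let C := p24 * x 4
    !![0, 0, p13, 0, 0, 0;
       0, 0, 0, p24, 0, C;
       -p13, 0, 0, 0, 0, p36;
       0, -p24, 0, 0, 0, 0;
       0, 0, 0, 0, 0, p56;
       0, -C, -p36, 0, -p56, 0] μ ν

/-- The Poisson bivector `P'` on the nilpotent group `A_{6,25}`. -/
noncomputable def P625' (a31 b42 b44 e65 : ℝ) : (Fin 6 → ℝ) → Fin 6 → Fin 6 → ℝ :=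
  fun x μ ν =>
    let A := a31 * x 0
    let B := b42 * x 1 + b44 * x 3
    let C := b42 * x 1 * x 4 + b44 * x 3 * x 4
    let E := e65 * x 4
    !![0, 0, A, 0, 0, 0;
       0, 0, 0, B, 0, C;
       -A, 0, 0, 0, 0, 0;
       0, -B, 0, 0, 0, 0;
       0, 0, 0, 0, 0, E;
       0, -C, 0, 0, -E, 0] μ ν


/-!
Write `X = ∂₄ + x₅ ∂₆`. Then
`P = p13 ∂₁∧∂₃ + p24 ∂₂∧X + p36 ∂₃∧∂₆ + p56 ∂₅∧∂₆` and
`P' = a31 x₁ ∂₁∧∂₃ + (b42 x₂ + b44 x₄) ∂₂∧X + e65 x₅ ∂₅∧∂₆`.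
All coefficients depend on `x₁, x₂, x₄, x₅` only, so in every bracket the sum over `ρ` reduces
to the rows `ρ ∈ {1, 2, 4, 5}` of `P` and `P'`, which are multiples of `∂₃, X, ∂₂, ∂₆`
respectively, while `∂_ρ` of the bivectors is a multiple of `∂₁∧∂₃, ∂₂∧X, ∂₂∧X` and a combination
of `∂₂∧∂₆, ∂₅∧∂₆`. Each surviving term is therefore a cyclic sum of `a ⊗ (u ∧ v)` with
`a ∈ {u, v}`, which vanishes. That is a polynomial identity in the components of `a, u, v` at the
three free indices, so no case distinction on the indices is needed.
-/

section pd

variable {m : ℕ} {μ : Fin m} {f g : (Fin m → ℝ) → ℝ} {x : Fin m → ℝ}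

lemma pd_const (c : ℝ) : pd μ (fun _ => c) x = 0 := by
  simp [pd]

lemma pd_coord (i : Fin m) : pd μ (fun y => y i) x = (Pi.single i 1 : Fin m → ℝ) μ := by
  simp [pd, fderiv_apply, Pi.single_apply, eq_comm]

lemma pd_add (hf : DifferentiableAt ℝ f x) (hg : DifferentiableAt ℝ g x) :
    pd μ (fun y => f y + g y) x = pd μ f x + pd μ g x := by
  simp [pd, fderiv_fun_add hf hg]

lemma pd_sub (hf : DifferentiableAt ℝ f x) (hg : DifferentiableAt ℝ g x) :
    pd μ (fun y => f y - g y) x = pd μ f x - pd μ g x := by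
  simp [pd, fderiv_fun_sub hf hg]

lemma pd_mul (hf : DifferentiableAt ℝ f x) (hg : DifferentiableAt ℝ g x) :
    pd μ (fun y => f y * g y) x = pd μ f x * g x + f x * pd μ g x := by
  simp [pd, fderiv_fun_mul hf hg]
  ring

end pd

def wedge {n R : Type*} [CommRing R] (u v : n → R) : n → n → R :=
  fun i j => u i * v j - u j * v i

local notation:max "𝐞" i:max => (Pi.single i 1 : Fin 6 → ℝ)

-- Coordinates are indexed from `0`: the paper's `xₖ` and `∂ₖ` are `x (k - 1)` and `𝐞 (k - 1)`.
def fieldX (x : Fin 6 → ℝ) : Fin 6 → ℝ := 𝐞 3 + x 4 • 𝐞 5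

lemma P625_eq_wedge (p13 p24 p36 p56 : ℝ) (x : Fin 6 → ℝ) :
    P625 p13 p24 p36 p56 x = p13 • wedge (𝐞 0) (𝐞 2) + p24 • wedge (𝐞 1) (fieldX x)
      + p36 • wedge (𝐞 2) (𝐞 5) + p56 • wedge (𝐞 4) (𝐞 5) := by
  ext μ ν
  fin_cases μ <;> fin_cases ν <;> simp [P625, wedge, fieldX]

lemma P625'_eq_wedge (a31 b42 b44 e65 : ℝ) (x : Fin 6 → ℝ) :
    P625' a31 b42 b44 e65 x = (a31 * x 0) • wedge (𝐞 0) (𝐞 2)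
      + (b42 * x 1 + b44 * x 3) • wedge (𝐞 1) (fieldX x) + (e65 * x 4) • wedge (𝐞 4) (𝐞 5) := by
  ext μ ν
  fin_cases μ <;> fin_cases ν <;> simp [P625', wedge, fieldX] <;> ring

lemma pd_P625 (p13 p24 p36 p56 : ℝ) (x : Fin 6 → ℝ) (ρ μ ν : Fin 6) :
    pd ρ (fun y => P625 p13 p24 p36 p56 y μ ν) x = p24 * 𝐞 4 ρ * wedge (𝐞 1) (𝐞 5) μ ν := by
  simp only [P625_eq_wedge, wedge, fieldX, Pi.add_apply, Pi.smul_apply, smul_eq_mul]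
  simp (disch := fun_prop) only [pd_add, pd_sub, pd_mul, pd_const, pd_coord]
  ring

lemma pd_P625' (a31 b42 b44 e65 : ℝ) (x : Fin 6 → ℝ) (ρ μ ν : Fin 6) :
    pd ρ (fun y => P625' a31 b42 b44 e65 y μ ν) x =
      a31 * 𝐞 0 ρ * wedge (𝐞 0) (𝐞 2) μ ν
      + (b42 * 𝐞 1 ρ + b44 * 𝐞 3 ρ) * wedge (𝐞 1) (fieldX x) μ ν
      + (b42 * x 1 + b44 * x 3) * 𝐞 4 ρ * wedge (𝐞 1) (𝐞 5) μ ν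
      + e65 * 𝐞 4 ρ * wedge (𝐞 4) (𝐞 5) μ ν := by
  simp only [P625'_eq_wedge, wedge, fieldX, Pi.add_apply, Pi.smul_apply, smul_eq_mul]
  simp (disch := fun_prop) only [pd_add, pd_sub, pd_mul, pd_const, pd_coord]
  ring

lemma schouten_P625 (p13 p24 p36 p56 : ℝ) (l μ ν : Fin 6) (x : Fin 6 → ℝ) :
    schouten (P625 p13 p24 p36 p56) l μ ν x = 0 := by
  simp only [schouten, pd_P625]
  simp only [Fin.sum_univ_six, P625_eq_wedge, wedge, fieldX, Pi.add_apply, Pi.smul_apply,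
    smul_eq_mul, Pi.single_eq_same, Pi.single_eq_of_ne, ne_eq, Fin.reduceEq, not_false_eq_true]
  ring

lemma schouten_P625' (a31 b42 b44 e65 : ℝ) (l μ ν : Fin 6) (x : Fin 6 → ℝ) :
    schouten (P625' a31 b42 b44 e65) l μ ν x = 0 := by
  simp only [schouten, pd_P625']
  simp only [Fin.sum_univ_six, P625'_eq_wedge, wedge, fieldX, Pi.add_apply, Pi.smul_apply,
    smul_eq_mul, Pi.single_eq_same, Pi.single_eq_of_ne, ne_eq, Fin.reduceEq, not_false_eq_true]
  ring

lemma schoutenMixed_P625_P625' (p13 p24 p36 p56 a31 b42 b44 e65 : ℝ) (l μ ν : Fin 6)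
    (x : Fin 6 → ℝ) :
    schoutenMixed (P625 p13 p24 p36 p56) (P625' a31 b42 b44 e65) l μ ν x = 0 := by
  simp only [schoutenMixed, pd_P625, pd_P625']
  simp only [Fin.sum_univ_six, P625_eq_wedge, P625'_eq_wedge, wedge, fieldX, Pi.add_apply,
    Pi.smul_apply, smul_eq_mul, Pi.single_eq_same, Pi.single_eq_of_ne, ne_eq, Fin.reduceEq,
    not_false_eq_true]
  ring

theorem A625_compatible (p13 p24 p36 p56 a31 b42 b44 e65 : ℝ) :
    (∀ x l μ ν, schouten (P625 p13 p24 p36 p56) l μ ν x = 0) ∧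
    (∀ x l μ ν, schouten (P625' a31 b42 b44 e65) l μ ν x = 0) ∧
    (∀ x l μ ν, schoutenMixed (P625 p13 p24 p36 p56)
        (P625' a31 b42 b44 e65) l μ ν x = 0) :=
  ⟨fun x l μ ν => schouten_P625 p13 p24 p36 p56 l μ ν x,
    fun x l μ ν => schouten_P625' a31 b42 b44 e65 l μ ν x,
    fun x l μ ν => schoutenMixed_P625_P625' p13 p24 p36 p56 a31 b42 b44 e65 l μ ν x⟩
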